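/- For every odd n ≥ 3, M(F_cy, D_3, n) = (n−2)!; that is, the maximum cardinality of a family of Hamilton cycles of K_n in which the union of any two distinct members has a vertex of degree 3 is exactly (n−2)!. -/

import Mathlib

/-- The edge set of the Hamilton cycle of the complete graph on `Fin n` that visits
the vertices cyclically in the order `σ 0, σ 1, …, σ (n-1), σ 0`. -/
def hamCycleEdges (n : ℕ) (σ : Equiv.Perm (Fin n)) : Finset (Sym2 (Fin n)) :=
  Finset.univ.image (fun i : Fin n =>
    s(σ i, σ ⟨((i : ℕ) + 1) % n, Nat.mod_lt _ i.pos⟩))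

/-- `E` is the edge set of a Hamilton cycle of the complete graph on `Fin n`. -/
def IsHamCycle (n : ℕ) (E : Finset (Sym2 (Fin n))) : Prop :=
  ∃ σ : Equiv.Perm (Fin n), E = hamCycleEdges n σ

/-- The degree of the vertex `v` in the graph on `Fin n` with edge set `E`. -/
def degIn (n : ℕ) (E : Finset (Sym2 (Fin n))) (v : Fin n) : ℕ :=
  (E.filter (fun e => v ∈ e)).card

/-!
Lower bound: there are `(n - 2)!` Hamilton cycles whose vertex sequence starts `0, 1`. If the
union of two Hamilton cycles has no vertex of degree 3, then at every vertex they share either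
both or none of their incident edges; starting from a common edge this forces the two vertex
sequences to agree step by step, so two distinct such cycles always create a vertex of degree 3.

Upper bound: for `n = 2m + 1`, Walecki's construction gives `m` pairwise edge-disjoint Hamilton
cycles `H₀, …, H_{m-1}`. The union of two edge-disjoint Hamilton cycles is 4-regular, so for every
permutation `g` at most one of the relabelled cycles `g Hₖ` lies in the family `F`. Conversely each
Hamilton cycle equals `g Hₖ` for at least `2n` permutations `g` (its dihedral symmetries), so
counting the pairs `(g, k)` with `g Hₖ ∈ F` gives `|F| · 2n · m ≤ n!`, that is `|F| ≤ (n - 2)!`.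
-/

open Finset Function Equiv
open scoped Nat

section CycleEdges

variable {V W : Type*} [DecidableEq V] [DecidableEq W] {n : ℕ} [NeZero n]

def cycleEdges (f : Fin n → V) : Finset (Sym2 V) :=
  univ.image fun i => s(f i, f (i + 1))

theorem hamCycleEdges_eq_cycleEdges (σ : Perm (Fin n)) : hamCycleEdges n σ = cycleEdges σ := by
  unfold hamCycleEdges cycleEdges
  congr! with i
  rw [Fin.val_add, Fin.val_one', Nat.add_mod_mod]

theorem mem_cycleEdges {f : Fin n → V} {e : Sym2 V} :
    e ∈ cycleEdges f ↔ ∃ i, s(f i, f (i + 1)) = e := by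
  simp [cycleEdges]

theorem cycleEdges_comp (g : V → W) (f : Fin n → V) :
    cycleEdges (g ∘ f) = (cycleEdges f).image (Sym2.map g) := by
  simp only [cycleEdges, image_image]
  rfl

theorem cycleEdges_comp_of_map_add_one_eq_add_one (f : Fin n → V) {e : Perm (Fin n)}
    (he : ∀ i, e (i + 1) = e i + 1) : cycleEdges (f ∘ e) = cycleEdges f := by
  have : (fun i => s((f ∘ e) i, (f ∘ e) (i + 1))) = (fun j => s(f j, f (j + 1))) ∘ e := by
    funext i; simp [he]
  rw [cycleEdges, this, ← image_image, image_univ_equiv, cycleEdges]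

theorem cycleEdges_comp_of_map_add_one_eq_sub_one (f : Fin n → V) {e : Perm (Fin n)}
    (he : ∀ i, e (i + 1) = e i - 1) : cycleEdges (f ∘ e) = cycleEdges f := by
  have : (fun i => s((f ∘ e) i, (f ∘ e) (i + 1))) =
      (fun j => s(f j, f (j + 1))) ∘ (Equiv.addRight 1).trans e := by
    funext i; simp [he, Sym2.eq_swap]
  rw [cycleEdges, this, ← image_image, image_univ_equiv, cycleEdges]

theorem add_one_add_one_ne_self (hn : 3 ≤ n) (i : Fin n) : i + 1 + 1 ≠ i := by
  intro h
  have h2 : ((1 + 1 : Fin n) : ℕ) = 0 := by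
    rw [add_assoc, add_eq_left] at h
    rw [h, Fin.val_zero]
  rw [Fin.val_add, Fin.val_one', Nat.mod_eq_of_lt (by omega : 1 < n),
    Nat.mod_eq_of_lt (by omega : 1 + 1 < n)] at h2
  omega

theorem filter_mem_cycleEdges {f : Fin n → V} (hf : Injective f) (j : Fin n) :
    (cycleEdges f).filter (f j ∈ ·) = {s(f (j - 1), f j), s(f j, f (j + 1))} := by
  ext e
  simp only [mem_filter, mem_cycleEdges, mem_insert, mem_singleton]
  constructor
  · rintro ⟨⟨i, rfl⟩, hj⟩
    rcases Sym2.mem_iff.mp hj with h | h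
    · right; rw [hf h]
    · left; rw [hf h, add_sub_cancel_right]
  · rintro (rfl | rfl)
    · exact ⟨⟨j - 1, by rw [sub_add_cancel]⟩, Sym2.mem_mk_right _ _⟩
    · exact ⟨⟨j, rfl⟩, Sym2.mem_mk_left _ _⟩

theorem card_filter_mem_cycleEdges (hn : 3 ≤ n) {f : Fin n → V} (hf : Injective f) (v : V)
    (hv : v ∈ Set.range f) : #((cycleEdges f).filter (v ∈ ·)) = 2 := by
  obtain ⟨j, rfl⟩ := hv
  rw [filter_mem_cycleEdges hf, card_pair]
  intro h
  have : f (j - 1) = f (j + 1) := by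
    rcases Sym2.eq_iff.mp h with ⟨h₁, h₂⟩ | ⟨h₁, -⟩
    · exact h₁.trans h₂
    · exact h₁
  exact add_one_add_one_ne_self hn (j - 1) (by simpa using (hf this).symm)

open Fin.NatCast in
theorem eq_of_forall_filter_eq_or_disjoint (hn : 3 ≤ n) {f g : Fin n → V} (hf : Injective f)
    (hg : Injective g) (h₀ : f 0 = g 0) (h₁ : f 1 = g 1)
    (H : ∀ v, (cycleEdges f).filter (v ∈ ·) = (cycleEdges g).filter (v ∈ ·) ∨
      Disjoint ((cycleEdges f).filter (v ∈ ·)) ((cycleEdges g).filter (v ∈ ·))) :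
    f = g := by
  -- The common edge `{f i, f (i + 1)}` makes the stars at `f (i + 1)` equal, and then their
  -- second edges agree.
  have step : ∀ i, f i = g i → f (i + 1) = g (i + 1) → f (i + 1 + 1) = g (i + 1 + 1) := by
    intro i hi hi₁
    have hfv := filter_mem_cycleEdges hf (i + 1)
    have hgv := filter_mem_cycleEdges hg (i + 1)
    rw [add_sub_cancel_right] at hfv hgv
    rw [← hi, ← hi₁] at hgv
    have hstar := H (f (i + 1))
    rw [hfv, hgv] at hstar
    replace hstar := hstar.resolve_right fun hd =>
      disjoint_left.mp hd (mem_insert_self _ _) (mem_insert_self _ _)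
    have hnext : s(f (i + 1), f (i + 1 + 1)) ∈
        ({s(f i, f (i + 1)), s(f (i + 1), g (i + 1 + 1))} : Finset _) :=
      hstar ▸ mem_insert_of_mem (mem_singleton_self _)
    rcases mem_insert.mp hnext with h | h
    · exact absurd (hf (Sym2.congr_right.mp (h.trans Sym2.eq_swap)))
        (add_one_add_one_ne_self hn i)
    · exact Sym2.congr_right.mp (mem_singleton.mp h)
  have key : ∀ k : ℕ, f k = g k ∧ f (k + 1) = g (k + 1) := by
    intro k
    induction k with
    | zero => simpa using ⟨h₀, h₁⟩
    | succ k ih =>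
      push_cast
      exact ⟨ih.2, step _ ih.1 ih.2⟩
  funext i
  simpa using (key i).1

end CycleEdges

section HamCycle

variable {n : ℕ}

theorem degIn_union_add_card_inter (E₁ E₂ : Finset (Sym2 (Fin n))) (v : Fin n) :
    degIn n (E₁ ∪ E₂) v + #(E₁.filter (v ∈ ·) ∩ E₂.filter (v ∈ ·)) =
      degIn n E₁ v + degIn n E₂ v := by
  rw [degIn, filter_union, card_union_add_card_inter]
  rfl

theorem degIn_hamCycleEdges (hn : 3 ≤ n) (σ : Perm (Fin n)) (v : Fin n) :
    degIn n (hamCycleEdges n σ) v = 2 := by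
  have : NeZero n := ⟨by omega⟩
  rw [degIn, hamCycleEdges_eq_cycleEdges]
  exact card_filter_mem_cycleEdges hn σ.injective v (σ.surjective v)

theorem degIn_union_hamCycleEdges_of_disjoint (hn : 3 ≤ n) {σ π : Perm (Fin n)}
    (hd : Disjoint (hamCycleEdges n σ) (hamCycleEdges n π)) (v : Fin n) :
    degIn n (hamCycleEdges n σ ∪ hamCycleEdges n π) v = 4 := by
  have h := degIn_union_add_card_inter (hamCycleEdges n σ) (hamCycleEdges n π) v
  rw [disjoint_iff_inter_eq_empty.mp (disjoint_filter_filter hd), card_empty,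
    degIn_hamCycleEdges hn, degIn_hamCycleEdges hn] at h
  exact h

theorem filter_eq_or_disjoint_of_degIn_union_ne_three (hn : 3 ≤ n) (σ π : Perm (Fin n))
    {v : Fin n} (hv : degIn n (hamCycleEdges n σ ∪ hamCycleEdges n π) v ≠ 3) :
    (hamCycleEdges n σ).filter (v ∈ ·) = (hamCycleEdges n π).filter (v ∈ ·) ∨
      Disjoint ((hamCycleEdges n σ).filter (v ∈ ·)) ((hamCycleEdges n π).filter (v ∈ ·)) := by
  have hsum := degIn_union_add_card_inter (hamCycleEdges n σ) (hamCycleEdges n π) v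
  rw [degIn_hamCycleEdges hn, degIn_hamCycleEdges hn] at hsum
  set A := (hamCycleEdges n σ).filter (v ∈ ·)
  set B := (hamCycleEdges n π).filter (v ∈ ·)
  have hA : #A = 2 := degIn_hamCycleEdges hn σ v
  have hB : #B = 2 := degIn_hamCycleEdges hn π v
  have hinter : #(A ∩ B) ≤ 2 := hA ▸ card_le_card inter_subset_left
  rcases (by omega : #(A ∩ B) = 0 ∨ #(A ∩ B) = 2) with h | h
  · exact Or.inr (disjoint_iff_inter_eq_empty.mpr (card_eq_zero.mp h))
  · have hAB : A ∩ B = A := eq_of_subset_of_card_le inter_subset_left (by omega)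
    have hBA : A ∩ B = B := eq_of_subset_of_card_le inter_subset_right (by omega)
    exact Or.inl (hAB.symm.trans hBA)

variable [NeZero n]

theorem exists_degIn_union_eq_three (hn : 3 ≤ n) {σ π : Perm (Fin n)} (h₀ : σ 0 = π 0)
    (h₁ : σ 1 = π 1) (hne : hamCycleEdges n σ ≠ hamCycleEdges n π) :
    ∃ v, degIn n (hamCycleEdges n σ ∪ hamCycleEdges n π) v = 3 := by
  by_contra! h
  refine hne (congrArg _ (DFunLike.coe_injective ?_))
  refine eq_of_forall_filter_eq_or_disjoint hn σ.injective π.injective h₀ h₁ fun v => ?_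
  simpa only [hamCycleEdges_eq_cycleEdges] using
    filter_eq_or_disjoint_of_degIn_union_ne_three hn σ π (h v)

theorem eq_of_hamCycleEdges_eq (hn : 3 ≤ n) {σ π : Perm (Fin n)} (h₀ : σ 0 = π 0)
    (h₁ : σ 1 = π 1) (he : hamCycleEdges n σ = hamCycleEdges n π) : σ = π := by
  refine DFunLike.coe_injective
    (eq_of_forall_filter_eq_or_disjoint hn σ.injective π.injective h₀ h₁ fun v => Or.inl ?_)
  rw [← hamCycleEdges_eq_cycleEdges, ← hamCycleEdges_eq_cycleEdges, he]

theorem card_perm_fixing_zero_one (hn : 2 ≤ n) :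
    #{σ : Perm (Fin n) | σ 0 = 0 ∧ σ 1 = 1} = (n - 2)! := by
  let s : Finset (Fin n) := {0, 1}
  have hs : #s = 2 := card_pair fun h => by
    have := congrArg Fin.val h
    rw [Fin.val_zero, Fin.val_one', Nat.mod_eq_of_lt (by omega)] at this
    omega
  have e : {σ : Perm (Fin n) // σ 0 = 0 ∧ σ 1 = 1} ≃ Perm {a // a ∉ s} :=
    calc {σ : Perm (Fin n) // σ 0 = 0 ∧ σ 1 = 1}
        ≃ {σ : Perm (Fin n) // ∀ a, ¬a ∉ s → σ a = a} := subtypeEquivRight fun σ => by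
          simp only [not_not, s, forall_mem_insert, mem_singleton, forall_eq]
      _ ≃ Perm {a // a ∉ s} := (Perm.subtypeEquivSubtypePerm _).symm
  rw [← Fintype.card_subtype, Fintype.card_congr e, Fintype.card_perm, Fintype.card_subtype_compl,
    Fintype.card_coe, hs, Fintype.card_fin]

end HamCycle

theorem exists_hamCycle_family_degIn_eq_three {n : ℕ} (hn : 3 ≤ n) :
    ∃ F : Finset (Finset (Sym2 (Fin n))), (∀ E ∈ F, IsHamCycle n E) ∧
      (∀ E₁ ∈ F, ∀ E₂ ∈ F, E₁ ≠ E₂ → ∃ v : Fin n, degIn n (E₁ ∪ E₂) v = 3) ∧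
      #F = (n - 2)! := by
  have : NeZero n := ⟨by omega⟩
  let P : Finset (Perm (Fin n)) := {σ | σ 0 = 0 ∧ σ 1 = 1}
  refine ⟨P.image (hamCycleEdges n), ?_, ?_, ?_⟩
  · simp only [mem_image]
    rintro _ ⟨σ, -, rfl⟩
    exact ⟨σ, rfl⟩
  · simp only [mem_image, P, mem_filter, mem_univ, true_and]
    rintro _ ⟨σ, hσ, rfl⟩ _ ⟨π, hπ, rfl⟩ hne
    exact exists_degIn_union_eq_three hn (hσ.1.trans hπ.1.symm) (hσ.2.trans hπ.2.symm) hne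
  · rw [card_image_of_injOn, card_perm_fixing_zero_one (by omega)]
    intro σ hσ π hπ he
    simp only [P, mem_coe, mem_filter, mem_univ, true_and] at hσ hπ
    exact eq_of_hamCycleEdges_eq hn (hσ.1.trans hπ.1.symm) (hσ.2.trans hπ.2.symm) he

section Walecki

variable (m : ℕ)

def zigzag (t : ℕ) : ZMod (2 * m) :=
  if Even t then ((t / 2 : ℕ) : ZMod (2 * m)) else -((t / 2 : ℕ) : ZMod (2 * m))

theorem zigzag_add_zigzag_succ (t : ℕ) :
    zigzag m t + zigzag m (t + 1) = if Even t then 0 else 1 := by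
  rcases Nat.even_or_odd t with ht | ht
  · have : (t + 1) / 2 = t / 2 := by rcases ht with ⟨r, rfl⟩; omega
    simp [zigzag, ht, Nat.even_add_one, this]
  · have : (t + 1) / 2 = t / 2 + 1 := by rcases ht with ⟨r, rfl⟩; omega
    simp [zigzag, Nat.not_even_iff_odd.mpr ht, Nat.even_add_one, this]

theorem zigzag_injOn : Set.InjOn (zigzag m) (Set.Icc 1 (2 * m)) := by
  rintro t ⟨ht, ht₂⟩ t' ⟨ht', ht₂'⟩ h
  have cast_inj {a b : ℕ} (ha : a < 2 * m) (hb : b < 2 * m)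
      (hab : (a : ZMod (2 * m)) = b) : a = b := by
    rwa [ZMod.natCast_eq_natCast_iff', Nat.mod_eq_of_lt ha, Nat.mod_eq_of_lt hb] at hab
  unfold zigzag at h
  split_ifs at h with he he' he'
  · rw [Nat.even_iff] at he he'
    have := cast_inj (by omega) (by omega) h
    omega
  · rw [Nat.even_iff] at he
    rw [Nat.not_even_iff] at he'
    have := cast_inj (a := t / 2 + t' / 2) (b := 0) (by omega) (by omega)
      (by push_cast; rw [h]; ring)
    omega
  · rw [Nat.not_even_iff] at he
    rw [Nat.even_iff] at he'
    have := cast_inj (a := t / 2 + t' / 2) (b := 0) (by omega) (by omega)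
      (by push_cast; rw [← h]; ring)
    omega
  · rw [Nat.not_even_iff] at he he'
    have := cast_inj (by omega) (by omega) (neg_inj.mp h)
    omega

/-- The `k`-th Walecki Hamilton cycle on the vertices `Option (ZMod (2 * m))`, where `none` is the
vertex at infinity: it visits `none, k, k + 1, k - 1, k + 2, k - 2, …, k + m`. -/
def walecki (k : ℕ) (j : Fin (2 * m + 1)) : Option (ZMod (2 * m)) :=
  if j = 0 then none else some (k + zigzag m j)

theorem walecki_injective (k : ℕ) : Injective (walecki m k) := by
  intro i j h
  unfold walecki at h
  split_ifs at h with hi hj hj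
  · rw [hi, hj]
  · have hi' : (i : ℕ) ≠ 0 := fun h0 => hi (Fin.ext h0)
    have hj' : (j : ℕ) ≠ 0 := fun h0 => hj (Fin.ext h0)
    exact Fin.ext (zigzag_injOn m ⟨by omega, by omega⟩ ⟨by omega, by omega⟩
      (add_left_cancel (Option.some_injective _ h)))

/-- The edges of the `k`-th Walecki cycle are the spokes from `none` to `k` and `k + m`, and the
chords `{x, y}` with `x + y ∈ {2k, 2k + 1}`; this label reads `k` off each of them. -/
def waleckiLabel : Sym2 (Option (ZMod (2 * m))) → ℕ :=
  Sym2.lift ⟨fun u v => match u, v with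
    | some x, some y => (x + y).val / 2
    | some x, none => x.val % m
    | none, some y => y.val % m
    | none, none => 0, by rintro (_ | x) (_ | y) <;> simp [add_comm]⟩

theorem waleckiLabel_of_mem_cycleEdges {k : ℕ} (hk : k < m) {e : Sym2 (Option (ZMod (2 * m)))}
    (he : e ∈ cycleEdges (walecki m k)) : waleckiLabel m e = k := by
  obtain ⟨j, rfl⟩ := mem_cycleEdges.mp he
  have hsucc := Fin.val_add_one j
  by_cases h0 : j = 0
  · subst h0
    have h1 : ((0 + 1 : Fin (2 * m + 1)) : ℕ) = 1 := by
      rw [zero_add, Fin.val_one', Nat.mod_eq_of_lt (by omega)]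
    have h1' : (0 + 1 : Fin (2 * m + 1)) ≠ 0 := fun h => by simp [h] at h1
    simp only [walecki, if_pos, if_neg h1', h1]
    show ((k : ZMod (2 * m)) + zigzag m 1).val % m = k
    simp [zigzag, ZMod.val_natCast, Nat.mod_eq_of_lt (by omega : k < 2 * m), Nat.mod_eq_of_lt hk]
  by_cases hl : j = Fin.last (2 * m)
  · subst hl
    rw [if_pos rfl] at hsucc
    have hz : Fin.last (2 * m) + 1 = 0 := Fin.ext hsucc
    have hl0 : Fin.last (2 * m) ≠ 0 := fun h => by
      rw [Fin.ext_iff, Fin.val_last, Fin.val_zero] at h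
      omega
    simp only [walecki, if_neg hl0, hz, if_pos]
    show ((k : ZMod (2 * m)) + zigzag m (2 * m)).val % m = k
    rw [zigzag, if_pos (even_two_mul m), Nat.mul_div_cancel_left _ two_pos, ← Nat.cast_add,
      ZMod.val_natCast, Nat.mod_eq_of_lt (show k + m < 2 * m by omega), Nat.add_mod_right,
      Nat.mod_eq_of_lt hk]
  rw [if_neg hl] at hsucc
  have hj1 : j + 1 ≠ 0 := fun h => by simp [h] at hsucc
  simp only [walecki, if_neg h0, if_neg hj1, hsucc]
  show ((k : ZMod (2 * m)) + zigzag m j + (k + zigzag m (j + 1))).val / 2 = k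
  have hsum : (k : ZMod (2 * m)) + zigzag m j + (k + zigzag m (j + 1)) =
      ((2 * k + if Even (j : ℕ) then 0 else 1 : ℕ) : ZMod (2 * m)) := by
    rw [show (k : ZMod (2 * m)) + zigzag m j + (k + zigzag m (j + 1)) =
      2 * k + (zigzag m j + zigzag m (j + 1)) by ring, zigzag_add_zigzag_succ]
    split_ifs <;> push_cast <;> ring
  rw [hsum, ZMod.val_natCast, Nat.mod_eq_of_lt (by split_ifs <;> omega)]
  split_ifs <;> omega

theorem pairwise_disjoint_cycleEdges_walecki :
    Pairwise (Disjoint on fun k : Fin m => cycleEdges (walecki m k)) := by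
  intro k k' hne
  refine disjoint_left.mpr fun e he he' => hne (Fin.ext ?_)
  rw [← waleckiLabel_of_mem_cycleEdges m k.isLt he, waleckiLabel_of_mem_cycleEdges m k'.isLt he']

theorem exists_pairwise_disjoint_hamCycleEdges [NeZero m] :
    ∃ τ : Fin m → Perm (Fin (2 * m + 1)),
      Pairwise (Disjoint on fun k => hamCycleEdges (2 * m + 1) (τ k)) := by
  let e : Option (ZMod (2 * m)) ≃ Fin (2 * m + 1) := Fintype.equivFinOfCardEq (by simp)
  refine ⟨fun k => ofBijective (e ∘ walecki m k)
    (Finite.injective_iff_bijective.mp (e.injective.comp (walecki_injective m k))), ?_⟩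
  intro k k' hne
  simp only [onFun, hamCycleEdges_eq_cycleEdges, coe_ofBijective, cycleEdges_comp,
    disjoint_image (Sym2.map.injective e.injective)]
  exact pairwise_disjoint_cycleEdges_walecki m hne

end Walecki

section UpperBound

theorem mul_le_card_filter_mem {α β : Type*} [Fintype α] [DecidableEq β] (f : α → β)
    (F : Finset β) {s : ℕ} (h : ∀ y ∈ F, s ≤ #{x | f x = y}) : #F * s ≤ #{x | f x ∈ F} := by
  rw [card_eq_sum_card_fiberwise (s := {x | f x ∈ F}) (t := F) fun x hx => (mem_filter.mp hx).2,
    ← smul_eq_mul]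
  refine card_nsmul_le_sum _ _ _ fun y hy => (h y hy).trans (card_le_card fun x hx => ?_)
  have hxy := (mem_filter.mp hx).2
  exact mem_filter.mpr ⟨mem_filter.mpr ⟨mem_univ x, hxy ▸ hy⟩, hxy⟩

variable {n : ℕ} [NeZero n]

theorem hamCycleEdges_mul (g σ : Perm (Fin n)) :
    hamCycleEdges n (g * σ) = (hamCycleEdges n σ).image (Sym2.map g) := by
  rw [hamCycleEdges_eq_cycleEdges, hamCycleEdges_eq_cycleEdges, Perm.coe_mul, cycleEdges_comp]

theorem hamCycleEdges_mul_addLeft (σ : Perm (Fin n)) (c : Fin n) :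
    hamCycleEdges n (σ * Equiv.addLeft c) = hamCycleEdges n σ := by
  rw [hamCycleEdges_eq_cycleEdges, hamCycleEdges_eq_cycleEdges, Perm.coe_mul]
  exact cycleEdges_comp_of_map_add_one_eq_add_one σ fun i => (add_assoc c i 1).symm

theorem hamCycleEdges_mul_subLeft (σ : Perm (Fin n)) (c : Fin n) :
    hamCycleEdges n (σ * Equiv.subLeft c) = hamCycleEdges n σ := by
  rw [hamCycleEdges_eq_cycleEdges, hamCycleEdges_eq_cycleEdges, Perm.coe_mul]
  exact cycleEdges_comp_of_map_add_one_eq_sub_one σ fun i => sub_add_eq_sub_sub c i 1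

theorem injective_sumElim_addLeft_subLeft (hn : 3 ≤ n) :
    Injective (Sum.elim Equiv.addLeft Equiv.subLeft : Fin n ⊕ Fin n → Perm (Fin n)) := by
  rintro (c | c) (c' | c') h <;> have h0 := DFunLike.congr_fun h 0 <;>
    have h1 := DFunLike.congr_fun h 1 <;>
    simp only [Sum.elim_inl, Sum.elim_inr, Equiv.coe_addLeft, Equiv.subLeft_apply, add_zero,
      sub_zero, Sum.inl.injEq, Sum.inr.injEq, reduceCtorEq] at h0 h1 ⊢
  · exact h0
  · subst h0
    exact add_one_add_one_ne_self hn (c - 1) (by rw [sub_add_cancel, h1])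
  · subst h0
    exact add_one_add_one_ne_self hn (c - 1) (by rw [sub_add_cancel, h1])
  · exact h0

theorem two_mul_le_card_hamCycleEdges_mul_eq (hn : 3 ≤ n) (σ ρ : Perm (Fin n)) :
    2 * n ≤ #{g : Perm (Fin n) | hamCycleEdges n (g * ρ) = hamCycleEdges n σ} := by
  let d : Fin n ⊕ Fin n → Perm (Fin n) := Sum.elim Equiv.addLeft Equiv.subLeft
  calc 2 * n = #(univ : Finset (Fin n ⊕ Fin n)) := by simp [two_mul]
    _ ≤ _ := card_le_card_of_injOn (fun p => σ * d p * ρ⁻¹)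
      (fun p _ => by
        simp only [coe_filter, mem_univ, true_and, Set.mem_ofPred, inv_mul_cancel_right]
        rcases p with c | c
        exacts [hamCycleEdges_mul_addLeft σ c, hamCycleEdges_mul_subLeft σ c])
      (fun p _ q _ h =>
        injective_sumElim_addLeft_subLeft hn (mul_left_cancel (mul_right_cancel h)))

theorem hamCycleEdges_ne_of_disjoint {σ π : Perm (Fin n)}
    (hd : Disjoint (hamCycleEdges n σ) (hamCycleEdges n π)) :
    hamCycleEdges n σ ≠ hamCycleEdges n π := by
  intro heq
  rw [← heq, disjoint_self_iff_empty, hamCycleEdges_eq_cycleEdges, cycleEdges] at hd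
  exact (univ_nonempty.image _).ne_empty hd

theorem card_filter_hamCycleEdges_mul_mem_le_one {ι : Type*} [Fintype ι] (hn : 3 ≤ n)
    {F : Finset (Finset (Sym2 (Fin n)))}
    (h3 : ∀ E₁ ∈ F, ∀ E₂ ∈ F, E₁ ≠ E₂ → ∃ v : Fin n, degIn n (E₁ ∪ E₂) v = 3)
    {τ : ι → Perm (Fin n)} (hτ : Pairwise (Disjoint on fun k => hamCycleEdges n (τ k)))
    (g : Perm (Fin n)) : #{k | hamCycleEdges n (g * τ k) ∈ F} ≤ 1 := by
  refine card_le_one.mpr fun k hk k' hk' => by_contra fun hne => ?_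
  have hd : Disjoint (hamCycleEdges n (g * τ k)) (hamCycleEdges n (g * τ k')) := by
    rw [hamCycleEdges_mul, hamCycleEdges_mul, disjoint_image (Sym2.map.injective g.injective)]
    exact hτ hne
  obtain ⟨v, hv⟩ := h3 _ (mem_filter.mp hk).2 _ (mem_filter.mp hk').2
    (hamCycleEdges_ne_of_disjoint hd)
  rw [degIn_union_hamCycleEdges_of_disjoint hn hd] at hv
  omega

end UpperBound

theorem card_le_of_forall_exists_degIn_eq_three {n : ℕ} (hn : 3 ≤ n) (hodd : Odd n)
    (F : Finset (Finset (Sym2 (Fin n)))) (hF : ∀ E ∈ F, IsHamCycle n E)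
    (h3 : ∀ E₁ ∈ F, ∀ E₂ ∈ F, E₁ ≠ E₂ → ∃ v : Fin n, degIn n (E₁ ∪ E₂) v = 3) :
    #F ≤ (n - 2)! := by
  obtain ⟨m, rfl⟩ := hodd
  have : NeZero m := ⟨by omega⟩
  obtain ⟨τ, hτ⟩ := exists_pairwise_disjoint_hamCycleEdges m
  have hdouble := card_mul_le_card_mul (s := univ) (t := univ) (m := #F * (2 * (2 * m + 1)))
    (n := 1) (fun k g => hamCycleEdges _ (g * τ k) ∈ F)
    (fun k _ => mul_le_card_filter_mem _ F fun E hE => by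
      obtain ⟨σ, rfl⟩ := hF E hE
      exact two_mul_le_card_hamCycleEdges_mul_eq hn σ (τ k))
    (fun g _ => card_filter_hamCycleEdges_mul_mem_le_one hn h3 hτ g)
  rw [card_univ, card_univ, Fintype.card_fin, Fintype.card_perm, Fintype.card_fin] at hdouble
  have hfac : (2 * m + 1)! = (2 * m + 1) * (2 * m) * (2 * m + 1 - 2)! := by
    rw [← Nat.mul_factorial_pred (by omega : 2 * m + 1 ≠ 0),
      ← Nat.mul_factorial_pred (by omega : 2 * m + 1 - 1 ≠ 0), Nat.sub_sub]
    simp [mul_assoc]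
  refine Nat.le_of_mul_le_mul_left (c := (2 * m + 1) * (2 * m)) ?_
    (Nat.mul_pos (by omega) (by omega))
  calc (2 * m + 1) * (2 * m) * #F = m * (#F * (2 * (2 * m + 1))) := by ring
    _ ≤ (2 * m + 1)! * 1 := hdouble
    _ = _ := by rw [hfac, mul_one]

/-- For every odd `n ≥ 3`, the maximum cardinality of a family of Hamilton cycles of
`K_n` in which the union of any two distinct members has a vertex of degree 3 is
exactly `(n−2)!`. -/
theorem stmt7 (n : ℕ) (hn : 3 ≤ n) (hodd : Odd n) :
    IsGreatest {k : ℕ | ∃ F : Finset (Finset (Sym2 (Fin n))),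
        (∀ E ∈ F, IsHamCycle n E) ∧
        (∀ E₁ ∈ F, ∀ E₂ ∈ F, E₁ ≠ E₂ → ∃ v : Fin n, degIn n (E₁ ∪ E₂) v = 3) ∧
        F.card = k}
      (Nat.factorial (n - 2)) := by
  refine ⟨exists_hamCycle_family_degIn_eq_three hn, ?_⟩
  rintro k ⟨F, hF, h3, rfl⟩
  exact card_le_of_forall_exists_degIn_eq_three hn hodd F hF h3
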